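/- arXiv:2203.05510 — 2 statements merged into one kernel-verified Lean document; each statement's English description precedes it below -/
import Mathlib

section
/- Under the tail-correction substitution μ = μ⋆/√η and η replaced by η⋆·(1 + μ⋆² − |μ⋆|·√(1+μ⋆²))², the NIG tail slope ξ = min(ξ_L, ξ_R) equals 1/(σ·√(η⋆)) for all μ⋆, i.e. it does not depend on μ⋆. -/
set_option maxHeartbeats 1000000 in
theorem NIG_tail_correction_slope (σ ηs : ℝ) (hσ : σ > 0) (hηs : ηs > 0) (μs : ℝ) :
    let η : ℝ := ηs * (1 + μs ^ 2 - |μs| * Real.sqrt (1 + μs ^ 2)) ^ 2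
    let μ : ℝ := μs / Real.sqrt η
    let ξL : ℝ := (1 + μ ^ 2 * η + μ * Real.sqrt (η * (1 + μ ^ 2 * η))) / (σ * Real.sqrt η)
    let ξR : ℝ := (1 + μ ^ 2 * η - μ * Real.sqrt (η * (1 + μ ^ 2 * η))) / (σ * Real.sqrt η)
    min ξL ξR = 1 / (σ * Real.sqrt ηs) := by
  intro η μ ξL ξR
  set s := Real.sqrt (1 + μs ^ 2) with hsdef
  have hs0 : (0:ℝ) ≤ 1 + μs ^ 2 := by positivity
  have hs2 : s ^ 2 = 1 + μs ^ 2 := Real.sq_sqrt hs0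
  have hsnn : 0 ≤ s := Real.sqrt_nonneg _
  have hsgt : |μs| < s := by
    nlinarith [abs_nonneg μs, sq_abs μs]
  have hc : 0 < 1 + μs ^ 2 - |μs| * s := by nlinarith [abs_nonneg μs]
  have hq : (Real.sqrt ηs) ^ 2 = ηs := Real.sq_sqrt hηs.le
  have hqs : 0 < Real.sqrt ηs := Real.sqrt_pos.mpr hηs
  have hη : η = ηs * (1 + μs ^ 2 - |μs| * s) ^ 2 := rfl
  have hηpos : 0 < η := by rw [hη]; positivity
  have hsqη : Real.sqrt η = Real.sqrt ηs * (1 + μs ^ 2 - |μs| * s) := by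
    rw [hη, Real.sqrt_mul hηs.le, Real.sqrt_sq hc.le]
  have hden : 0 < Real.sqrt ηs * (1 + μs ^ 2 - |μs| * s) := by positivity
  have hμ : μ = μs / (Real.sqrt ηs * (1 + μs ^ 2 - |μs| * s)) := by
    show μs / Real.sqrt η = _
    rw [hsqη]
  have hμ2η : μ ^ 2 * η = μs ^ 2 := by
    have h2 : μ ^ 2 = μs ^ 2 / η := by
      show (μs / Real.sqrt η) ^ 2 = _
      rw [div_pow, Real.sq_sqrt hηpos.le]
    rw [h2, div_mul_cancel₀ _ hηpos.ne']
  have h1 : 1 + μ ^ 2 * η = s ^ 2 := by rw [hμ2η, hs2]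
  have hrad : Real.sqrt (η * (1 + μ ^ 2 * η)) = Real.sqrt η * s := by
    rw [h1, Real.sqrt_mul hηpos.le, Real.sqrt_sq hsnn]
  have hμrad : μ * Real.sqrt (η * (1 + μ ^ 2 * η)) = μs * s := by
    rw [hrad, hμ, hsqη]
    field_simp
  have hξL : ξL = (s ^ 2 + μs * s) / (σ * (Real.sqrt ηs * (1 + μs ^ 2 - |μs| * s))) := by
    show (1 + μ ^ 2 * η + μ * Real.sqrt (η * (1 + μ ^ 2 * η))) / (σ * Real.sqrt η) = _
    rw [hμrad, h1, hsqη]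
  have hξR : ξR = (s ^ 2 - μs * s) / (σ * (Real.sqrt ηs * (1 + μs ^ 2 - |μs| * s))) := by
    show (1 + μ ^ 2 * η - μ * Real.sqrt (η * (1 + μ ^ 2 * η))) / (σ * Real.sqrt η) = _
    rw [hμrad, h1, hsqη]
  have hD : 0 < σ * (Real.sqrt ηs * (1 + μs ^ 2 - |μs| * s)) := by positivity
  rcases abs_cases μs with ⟨hb, ha⟩ | ⟨hb, ha⟩
  · have hmin : min ξL ξR = ξR := by
      apply min_eq_right
      rw [hξL, hξR]
      gcongr
      nlinarith
    rw [hmin, hξR, hb, ← hs2]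
    have hpos : 0 < s ^ 2 - μs * s := by nlinarith
    rw [div_eq_div_iff (mul_pos hσ (mul_pos hqs hpos)).ne' (by positivity)]
    ring
  · have hmin : min ξL ξR = ξL := by
      apply min_eq_left
      rw [hξL, hξR]
      gcongr
      nlinarith
    rw [hmin, hξL, hb, ← hs2]
    have hpos : 0 < s ^ 2 - -μs * s := by nlinarith
    rw [div_eq_div_iff (mul_pos hσ (mul_pos hqs hpos)).ne' (by positivity)]
    ring
end

section
/- Under the tail-correction substitution for the NIG distribution (μ = μ⋆/√η with η chosen as η⋆(1+μ⋆² − |μ⋆|√(1+μ⋆²))²), the tail asymmetry ratio γ = ξ_L/ξ_R equals 1 + 2(μ⋆² + μ⋆·√(1+μ⋆²)) for μ⋆ ≥ 0, depending only on μ⋆. -/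
/-!
With `s = √(1 + μ⋆²)` the substitution turns `μ²η` into `μ⋆²` and `μ√(η(1 + μ²η))` into `μ⋆ s`,
so `η` cancels and `γ = (s² + μ⋆ s) / (s² - μ⋆ s) = (s + μ⋆) / (s - μ⋆) = (s + μ⋆)²`, using
`s² - μ⋆² = 1`. Every denominator is positive because `s > |μ⋆|`.
-/

open Real

lemma abs_lt_sqrt_one_add_sq (m : ℝ) : |m| < √(1 + m ^ 2) := by
  rw [← sqrt_sq_eq_abs]
  exact sqrt_lt_sqrt (sq_nonneg m) (by linarith)

lemma one_add_sq_sub_abs_mul_sqrt_pos (m : ℝ) : 0 < 1 + m ^ 2 - |m| * √(1 + m ^ 2) := by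
  have hs : √(1 + m ^ 2) ^ 2 = 1 + m ^ 2 := sq_sqrt (by positivity)
  have hlt := abs_lt_sqrt_one_add_sq m
  calc 0 < √(1 + m ^ 2) * (√(1 + m ^ 2) - |m|) :=
        mul_pos ((abs_nonneg m).trans_lt hlt) (sub_pos.2 hlt)
    _ = 1 + m ^ 2 - |m| * √(1 + m ^ 2) := by rw [mul_sub, ← sq, hs, mul_comm]

lemma one_add_sq_add_mul_sqrt_div_sub (m : ℝ) :
    (1 + m ^ 2 + m * √(1 + m ^ 2)) / (1 + m ^ 2 - m * √(1 + m ^ 2)) =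
      1 + 2 * (m ^ 2 + m * √(1 + m ^ 2)) := by
  have hs : √(1 + m ^ 2) ^ 2 = 1 + m ^ 2 := sq_sqrt (by positivity)
  have hden : 0 < 1 + m ^ 2 - m * √(1 + m ^ 2) :=
    (one_add_sq_sub_abs_mul_sqrt_pos m).trans_le
      (by gcongr; exact le_abs_self m)
  rw [div_eq_iff hden.ne']
  linear_combination 2 * m ^ 2 * hs

lemma div_sqrt_sq_mul (a : ℝ) {η : ℝ} (hη : 0 < η) : (a / √η) ^ 2 * η = a ^ 2 := by
  rw [div_pow, sq_sqrt hη.le, div_mul_cancel₀ _ hη.ne']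

lemma div_sqrt_mul_sqrt_mul (a x : ℝ) {η : ℝ} (hη : 0 < η) :
    a / √η * √(η * x) = a * √x := by
  rw [sqrt_mul hη.le, ← mul_assoc, div_mul_cancel₀ _ (sqrt_pos.2 hη).ne']

theorem NIG_tail_correction_gamma_general (σ ηs : ℝ) (hσ : σ > 0) (hηs : ηs > 0)
    (μs : ℝ) :
    let η : ℝ := ηs * (1 + μs ^ 2 - |μs| * Real.sqrt (1 + μs ^ 2)) ^ 2
    let μ : ℝ := μs / Real.sqrt η
    let ξL : ℝ := (1 + μ ^ 2 * η + μ * Real.sqrt (η * (1 + μ ^ 2 * η))) / (σ * Real.sqrt η)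
    let ξR : ℝ := (1 + μ ^ 2 * η - μ * Real.sqrt (η * (1 + μ ^ 2 * η))) / (σ * Real.sqrt η)
    ξL / ξR = 1 + 2 * (μs ^ 2 + μs * Real.sqrt (1 + μs ^ 2)) := by
  intro η μ ξL ξR
  have hη : 0 < η := mul_pos hηs (pow_pos (one_add_sq_sub_abs_mul_sqrt_pos μs) 2)
  have hc : σ * √η ≠ 0 := (mul_pos hσ (sqrt_pos.2 hη)).ne'
  simp only [ξL, ξR, μ, div_sqrt_sq_mul μs hη, div_sqrt_mul_sqrt_mul μs _ hη,
    div_div_div_cancel_right₀ hc]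
  exact one_add_sq_add_mul_sqrt_div_sub μs

theorem NIG_tail_correction_gamma (σ ηs : ℝ) (hσ : σ > 0) (hηs : ηs > 0)
    (μs : ℝ) (hμs : 0 ≤ μs) :
    let η : ℝ := ηs * (1 + μs ^ 2 - |μs| * Real.sqrt (1 + μs ^ 2)) ^ 2
    let μ : ℝ := μs / Real.sqrt η
    let ξL : ℝ := (1 + μ ^ 2 * η + μ * Real.sqrt (η * (1 + μ ^ 2 * η))) / (σ * Real.sqrt η)
    let ξR : ℝ := (1 + μ ^ 2 * η - μ * Real.sqrt (η * (1 + μ ^ 2 * η))) / (σ * Real.sqrt η)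
    ξL / ξR = 1 + 2 * (μs ^ 2 + μs * Real.sqrt (1 + μs ^ 2)) :=
  NIG_tail_correction_gamma_general σ ηs hσ hηs μs
end
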